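/- arXiv:1301.3443 — 3 statements merged into one kernel-verified Lean document; each statement's English description precedes it below -/
import Mathlib

section
/- The loop space of the circle based at any point is equivalent (as a type/set) to the integers. -/
/-! `Circle.exp : ℝ → Circle` is a covering map with deck group `2πℤ` acting by translation, and
`ℝ` is simply connected, so monodromy identifies `π₁(Circle, x₀)` with `(2πℤ)ᵐᵒᵖ ≅ ℤ`. -/

open Real

noncomputable def AddSubgroup.zmultiplesEquivInt {M : Type*} [AddCommGroup M] [IsAddTorsionFree M]
    {a : M} (ha : a ≠ 0) : AddSubgroup.zmultiples a ≃ ℤ :=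
  ((Equiv.ofInjective (· • a) (smul_left_injective ℤ ha)).trans
    (Equiv.subtypeEquivRight fun _ => AddSubgroup.mem_zmultiples_iff.symm)).symm

theorem loop_space_circle_equiv_int (x₀ : Circle) :
    Nonempty (FundamentalGroup Circle x₀ ≃ ℤ) := by
  obtain ⟨t, ht⟩ := Circle.exp_surjective x₀
  have π₁_equiv_deck := Circle.isAddQuotientCoveringMap_exp.fundamentalGroupEquiv ⟨t, ht⟩
  exact ⟨π₁_equiv_deck.toEquiv.trans <| MulOpposite.opEquiv.symm.trans <|
    Multiplicative.toAdd.trans <| AddSubgroup.zmultiplesEquivInt two_pi_pos.ne'⟩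
end

section
/- All higher homotopy groups of the circle vanish: πₙ(S¹) is trivial for n ≥ 2. -/
/-!
A generalized loop `f : I^n → S¹` lifts along the covering `Circle.exp : ℝ → S¹`, since the cube
is contractible. For `n ≥ 2` the boundary of the cube is connected, so the lift maps it to a single
point of the discrete fibre over `1`; the straight-line homotopy in `ℝ` from the lift to that
constant is then relative to the boundary, and pushing it down contracts `f`.
-/

open scoped unitInterval Topology Topology.Homotopy

instance unitInterval.contractibleSpace : ContractibleSpace I :=
  (convex_Icc (0 : ℝ) 1).contractibleSpace ⟨0, unitInterval.zero_mem⟩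

instance unitInterval.locallyPathConnectedSpace : LocallyPathConnectedSpace I :=
  (convex_Icc (0 : ℝ) 1).locallyPathConnectedSpace

instance ContractibleSpace.pi {ι : Type*} {Z : ι → Type*} [∀ i, TopologicalSpace (Z i)]
    [∀ i, ContractibleSpace (Z i)] : ContractibleSpace (∀ i, Z i) := by
  rw [contractible_iff_id_nullhomotopic]
  choose c hc using fun i ↦ (id_nullhomotopic (Z i)).comp_left (ContinuousMap.eval i)
  exact ⟨c, ⟨ContinuousMap.Homotopy.pi fun i ↦ (hc i).some⟩⟩

namespace Cube

variable {N : Type*}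

theorem isPreconnected_setOf_apply_eq (i : N) (b : I) : IsPreconnected {y : I^N | y i = b} := by
  classical
  have : {y : I^N | y i = b} = Set.range (Function.update · i b) := by
    ext y
    exact ⟨fun hy ↦ ⟨y, Function.update_eq_self_iff.mpr hy.symm⟩, by rintro ⟨x, rfl⟩; simp⟩
  rw [this]
  exact isPreconnected_range (continuous_id.update i continuous_const)

theorem isPreconnected_boundary [Nontrivial N] : IsPreconnected (boundary N) := by
  classical
  refine isPreconnected_of_forall 0 fun y ⟨i, hy⟩ ↦ ?_
  obtain ⟨j, hji⟩ := exists_ne i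
  refine ⟨{x | x i = y i} ∪ {x | x j = 0}, ?_, Or.inr rfl, Or.inl rfl, ?_⟩
  · rintro x (hx | hx)
    exacts [⟨i, hx ▸ hy⟩, ⟨j, Or.inl hx⟩]
  · refine (isPreconnected_setOf_apply_eq i (y i)).union (Function.update y j 0) ?_ ?_
      (isPreconnected_setOf_apply_eq j 0)
    · simp [Function.update_of_ne hji.symm]
    · simp

end Cube

theorem ContinuousMap.homotopicRel_of_eqOn {X E : Type*} [TopologicalSpace X]
    [AddCommGroup E] [TopologicalSpace E] [IsTopologicalAddGroup E] [Module ℝ E]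
    [ContinuousSMul ℝ E] {f g : C(X, E)} {S : Set X} (h : Set.EqOn f g S) : f.HomotopicRel g S :=
  ⟨{ Homotopy.affine f g with prop' := fun t x hx ↦ by simp [h hx] }⟩

namespace IsCoveringMap

variable {N X E : Type*} [TopologicalSpace X] [TopologicalSpace E] {p : E → X}

theorem exists_lift_genLoop [Nontrivial N] (hp : IsCoveringMap p) {e : E} (f : Ω^ N X (p e)) :
    ∃ g : C(I^N, E), p ∘ g = f ∧ ∀ y ∈ Cube.boundary N, g y = e := by
  obtain ⟨i⟩ : Nonempty N := inferInstance
  have h0 : (0 : I^N) ∈ Cube.boundary N := ⟨i, Or.inl rfl⟩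
  obtain ⟨g, ⟨hg0, hgf⟩, -⟩ := hp.existsUnique_continuousMap_lifts f.1 0 e (f.2 0 h0).symm
  refine ⟨g, hgf, fun y hy ↦ ?_⟩
  rw [← hg0]
  refine Cube.isPreconnected_boundary.constant_of_mapsTo (T := p ⁻¹' {p e})
    (isDiscrete_iff_discreteTopology.mpr (hp (p e)).discreteTopology_fiber)
    g.continuous.continuousOn (fun z hz ↦ ?_) hy h0
  exact (congrFun hgf z).trans (f.2 z hz)

variable [AddCommGroup E] [IsTopologicalAddGroup E] [Module ℝ E] [ContinuousSMul ℝ E]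

theorem genLoop_homotopic_const [Nontrivial N] (hp : IsCoveringMap p) {e : E}
    (f : Ω^ N X (p e)) : GenLoop.Homotopic f GenLoop.const := by
  obtain ⟨g, hgf, hg⟩ := hp.exists_lift_genLoop f
  have hf : ContinuousMap.comp ⟨p, hp.continuous⟩ g = f := ContinuousMap.ext (congrFun hgf)
  have := (ContinuousMap.homotopicRel_of_eqOn (g := .const _ e) hg).comp_continuousMap
    ⟨p, hp.continuous⟩
  rwa [hf] at this

theorem subsingleton_homotopyGroup [Nontrivial N] (hp : IsCoveringMap p) (e : E) :
    Subsingleton (HomotopyGroup N X (p e)) :=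
  ⟨Quotient.ind₂ fun f₁ f₂ ↦ Quotient.sound <|
    (hp.genLoop_homotopic_const f₁).trans (hp.genLoop_homotopic_const f₂).symm⟩

end IsCoveringMap

theorem higher_homotopy_groups_circle_trivial (n : ℕ) (hn : 2 ≤ n) :
    Subsingleton (HomotopyGroup (Fin n) Circle 1) := by
  have : Nontrivial (Fin n) := Fin.nontrivial_iff_two_le.mpr hn
  simpa using Circle.isCoveringMap_exp.subsingleton_homotopyGroup 0
end

section
/- The map sending n : ℤ to the homotopy class of the loop t ↦ exp(2πint) is a group homomorphism from ℤ to π₁(S¹, 1). -/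
attribute [local instance] Path.Homotopic.setoid

/-- The loop on the circle winding `n` times. -/
noncomputable def circleLoop (n : ℤ) : Path (1 : Circle) 1 where
  toFun t := Circle.exp (2 * Real.pi * n * t)
  continuous_toFun := by fun_prop
  source' := by simp
  target' := by
    show Circle.exp (2 * Real.pi * n * ((1 : unitInterval) : ℝ)) = 1
    rw [show ((1 : unitInterval) : ℝ) = 1 from rfl, mul_one, ← Circle.exp_zero, Circle.exp_eq_exp]
    exact ⟨n, by push_cast; ring⟩

/-!
Lift everything along the covering map `x ↦ exp(2πix)` from `ℝ`. The loop `circleLoop (m + n)` is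
the image of the segment `[0, m + n]`, and `circleLoop m ⬝ circleLoop n` is the image of the
concatenation of `[0, m]` and `[m, m + n]`, the second piece because `exp(2πix)` has period `1`.
These two paths in `ℝ` have the same endpoints, so they are homotopic since `ℝ` is simply connected.
-/

open Real

theorem Path.homotopic_of_eq_comp {X Y : Type*} [TopologicalSpace X] [SimplyConnectedSpace X]
    [TopologicalSpace Y] (f : C(X, Y)) {a b : X} {x y : Y} {p q : Path x y} (p' q' : Path a b)
    (hp : ⇑p = f ∘ p') (hq : ⇑q = f ∘ q') : p.Homotopic q := by
  obtain rfl : f a = x := by simpa using (congrFun hp 0).symm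
  obtain rfl : f b = y := by simpa using (congrFun hp 1).symm
  obtain rfl : p = p'.map f.continuous := Path.ext hp
  obtain rfl : q = q'.map f.continuous := Path.ext hq
  exact (SimplyConnectedSpace.paths_homotopic p' q').map f

noncomputable def expMap : C(ℝ, Circle) :=
  ⟨fun x ↦ Circle.exp (2 * π * x), by fun_prop⟩

theorem expMap_apply (x : ℝ) : expMap x = Circle.exp (2 * π * x) := rfl

theorem expMap_add_intCast (x : ℝ) (k : ℤ) : expMap (x + k) = expMap x := by
  rw [expMap_apply, expMap_apply, Circle.exp_eq_exp]
  exact ⟨k, by ring⟩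

theorem circleLoop_apply (k a : ℤ) (t : unitInterval) : circleLoop k t = expMap (t * k + a) := by
  rw [expMap_add_intCast, expMap_apply]
  exact congrArg Circle.exp (by ring)

theorem circleLoop_add_homotopic (m n : ℤ) :
    (circleLoop (m + n)).Homotopic ((circleLoop m).trans (circleLoop n)) := by
  refine Path.homotopic_of_eq_comp expMap (Path.segment 0 ((m : ℝ) + n))
    ((Path.segment 0 (m : ℝ)).trans (Path.segment (m : ℝ) (m + n))) ?_ ?_
  · ext1 t
    simp [Path.segment_apply, AffineMap.lineMap_apply_ring', circleLoop_apply (m + n) 0]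
  · ext1 t
    simp only [Function.comp_apply, Path.trans_apply]
    split_ifs
    · simp [Path.segment_apply, AffineMap.lineMap_apply_ring', circleLoop_apply m 0]
    · simp [Path.segment_apply, AffineMap.lineMap_apply_ring', circleLoop_apply n m]

theorem loop_class_hom (m n : ℤ) :
    (FundamentalGroup.fromPath (X := TopCat.of Circle) ⟦circleLoop (m + n)⟧ :
        FundamentalGroup Circle 1) =
      FundamentalGroup.fromPath (X := TopCat.of Circle) ⟦circleLoop m⟧ *
        FundamentalGroup.fromPath (X := TopCat.of Circle) ⟦circleLoop n⟧ := by
  -- `p * q` in `FundamentalGroup` is the groupoid composite `q ⬝ p`, hence the swap.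
  rw [FundamentalGroup.mul_def, add_comm]
  exact Quotient.sound (circleLoop_add_homotopic n m)
end
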